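/- For each t ∈ K with t ≠ 0, the algebra Λ(t) defined by the tetrahedral quiver with deformation parameter tλ in place of λ is isomorphic to Λ(1) = Λ(m,λ); explicitly, choosing a_t ∈ K with a_t^{3(m−1)} = t, the map sending each arrow θ to a_t·θ extends to an algebra isomorphism Λ(1) → Λ(t). Consequently Λ(m,λ) degenerates to Λ(m,0) in the variety of 36m-dimensional algebras. -/

import Mathlib

open scoped TensorProduct

namespace HigherTetrahedral

/-- The twelve arrows of the tetrahedral triangulation quiver. -/
inductive Arr : Type
  | nu | de | ep | rh | si | al | ga | be | xi | et | om | mu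
  deriving DecidableEq

open Arr

instance : Fintype Arr :=
  ⟨⟨{nu, de, ep, rh, si, al, ga, be, xi, et, om, mu}, by decide⟩, fun x => by cases x <;> decide⟩

/-- Source vertex of each arrow (vertex `v` is `⟨v-1⟩ : Fin 6`). -/
def src : Arr → Fin 6
  | nu => 0 | de => 0 | ep => 1 | rh => 1 | si => 2 | al => 2
  | ga => 3 | be => 3 | xi => 4 | et => 4 | om => 5 | mu => 5

/-- Target vertex of each arrow. -/
def tgt : Arr → Fin 6
  | nu => 5 | de => 4 | ep => 4 | rh => 5 | si => 1 | al => 0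
  | ga => 0 | be => 1 | xi => 2 | et => 3 | om => 3 | mu => 2

/-- The permutation `f` of arrows, with orbits (δ η γ), (ε ξ σ), (ρ ω β), (ν μ α). -/
def f : Arr → Arr
  | de => et | et => ga | ga => de
  | ep => xi | xi => si | si => ep
  | rh => om | om => be | be => rh
  | nu => mu | mu => al | al => nu

/-- The permutation `g`: `g θ` is the arrow starting at `tgt θ` other than `f θ`. -/
def g : Arr → Arr
  | de => xi | et => be | ga => nu
  | ep => et | xi => al | si => rh
  | rh => mu | om => ga | be => ep
  | nu => om | mu => si | al => de

variable (K : Type) [Field K]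

/-- The ambient free algebra on the vertices and arrows. -/
abbrev FreeTet := FreeAlgebra K ((Fin 6) ⊕ Arr)

/-- Generator corresponding to a vertex. -/
def V (i : Fin 6) : FreeTet K := FreeAlgebra.ι K (Sum.inl i)

/-- Generator corresponding to an arrow. -/
def A (θ : Arr) : FreeTet K := FreeAlgebra.ι K (Sum.inr θ)

variable (m : ℕ) (lam : K)

/-- The defining relations of the higher tetrahedral algebra `Λ(m,λ)`, together with
the path-algebra relations for the vertex idempotents. -/
inductive TetRel : FreeTet K → FreeTet K → Prop
  | idem (i j : Fin 6) : TetRel (V K i * V K j) (if i = j then V K i else 0)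
  | sum_one : TetRel (∑ i : Fin 6, V K i) 1
  | src_tgt (θ : Arr) : TetRel (V K (src θ) * A K θ * V K (tgt θ)) (A K θ)
  | rel_ga : TetRel (A K ga * A K de)
      (A K be * A K ep + lam • ((A K be * A K rh * A K om) ^ (m - 1) * (A K be * A K ep)))
  | rel_rh : TetRel (A K rh * A K om)
      (A K ep * A K et + lam • ((A K ep * A K xi * A K si) ^ (m - 1) * (A K ep * A K et)))
  | rel_xi : TetRel (A K xi * A K si)
      (A K et * A K be + lam • ((A K et * A K ga * A K de) ^ (m - 1) * (A K et * A K be)))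
  | rel_de : TetRel (A K de * A K et) (A K nu * A K om)
  | rel_om : TetRel (A K om * A K be) (A K mu * A K si)
  | rel_si : TetRel (A K si * A K ep) (A K al * A K de)
  | rel_et : TetRel (A K et * A K ga) (A K xi * A K al)
  | rel_be : TetRel (A K be * A K rh) (A K ga * A K nu)
  | rel_ep : TetRel (A K ep * A K xi) (A K rh * A K mu)
  | rel_nu : TetRel (A K nu * A K mu) (A K de * A K xi)
  | rel_mu : TetRel (A K mu * A K al) (A K om * A K ga)
  | rel_al : TetRel (A K al * A K nu) (A K si * A K rh)
  | zero_rel (θ : Arr) : TetRel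
      ((A K θ * A K (f θ) * A K (f (f θ))) ^ (m - 1) * (A K θ * A K (f θ)) * A K (g (f θ))) 0

/-- The higher tetrahedral algebra `Λ(m,λ)`. -/
abbrev Tet := RingQuot (TetRel K m lam)

/-- The idempotent of `Λ(m,λ)` at a vertex. -/
def e (i : Fin 6) : Tet K m lam := RingQuot.mkAlgHom K (TetRel K m lam) (V K i)

/-- The image in `Λ(m,λ)` of an arrow. -/
def a (θ : Arr) : Tet K m lam := RingQuot.mkAlgHom K (TetRel K m lam) (A K θ)

/-- The elements `X_i` (vertex `i+1` in the paper's numbering):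
`X₁ = δηγ`, `X₂ = ρωβ`, `X₃ = ανμ`, `X₄ = γδη`, `X₅ = ηγδ`, `X₆ = ωβρ`. -/
def X : Fin 6 → Tet K m lam
  | 0 => a K m lam de * a K m lam et * a K m lam ga
  | 1 => a K m lam rh * a K m lam om * a K m lam be
  | 2 => a K m lam al * a K m lam nu * a K m lam mu
  | 3 => a K m lam ga * a K m lam de * a K m lam et
  | 4 => a K m lam et * a K m lam ga * a K m lam de
  | 5 => a K m lam om * a K m lam be * a K m lam rh

/-- Product in `Λ(m,λ)` of a list of arrows (a path, read left to right). -/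
def pathProd (l : List Arr) : Tet K m lam := (l.map (a K m lam)).prod

/-- `IsPath i j l` : the list of arrows `l` is a (composable) path from vertex `i`
to vertex `j`. -/
def IsPath (i j : Fin 6) (l : List Arr) : Prop :=
  l ≠ [] ∧ l.Chain' (fun x y => tgt x = src y) ∧
    (∀ h : l ≠ [], src (l.head h) = i ∧ tgt (l.getLast h) = j)

end HigherTetrahedral

/-! Every defining relation of `Λ(m,λ)` is homogeneous once arrows get degree `1` and `λ`
gets degree `3(m-1)`: the correction term `(βρω)^(m-1)βε` is `3(m-1)` arrows longer than
`βε`. Hence scaling every arrow by `u` carries the relations of `Λ(m,μ)` onto those of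
`Λ(m,u^(3(m-1))μ)`, and for `u ≠ 0` scaling back by `u⁻¹` is an inverse. -/

namespace HigherTetrahedral

section ScaledRelations

variable {K B : Type} [CommSemiring K] [Semiring B] [Algebra K B] (u : K)

theorem smul_mul_smul_of_mul_eq {x y z w : B} (h : x * y = z * w) :
    u • x * u • y = u • z * u • w := by
  rw [smul_mul_smul_comm, h, smul_mul_smul_comm]

theorem smul_mul_smul_of_deformed_rel {m : ℕ} {μ ν : K} (hν : ν = u ^ (3 * (m - 1)) * μ)
    {x y z w p q : B} (h : x * y = z * w + ν • ((z * p * q) ^ (m - 1) * (z * w))) :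
    u • x * u • y = u • z * u • w +
      μ • ((u • z * u • p * u • q) ^ (m - 1) * (u • z * u • w)) := by
  simp only [smul_mul_smul_comm, smul_pow, smul_smul, h, smul_add, hν]
  congr 2
  ring

theorem smul_path_eq_zero {m : ℕ} {x y z w : B} (h : (x * y * z) ^ (m - 1) * (x * y) * w = 0) :
    (u • x * u • y * u • z) ^ (m - 1) * (u • x * u • y) * u • w = 0 := by
  simp only [smul_mul_smul_comm, smul_pow, h, smul_zero]

end ScaledRelations

variable (K : Type) [Field K] (m : ℕ)

theorem mkAlgHom_V (ν : K) (i : Fin 6) :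
    RingQuot.mkAlgHom K (TetRel K m ν) (V K i) = e K m ν i := rfl

theorem mkAlgHom_A (ν : K) (θ : Arr) :
    RingQuot.mkAlgHom K (TetRel K m ν) (A K θ) = a K m ν θ := rfl

theorem algHom_ext {B : Type} [Semiring B] [Algebra K B] {μ : K} {F G : Tet K m μ →ₐ[K] B}
    (he : ∀ i, F (e K m μ i) = G (e K m μ i)) (ha : ∀ θ, F (a K m μ θ) = G (a K m μ θ)) :
    F = G := by
  refine RingQuot.ringQuot_ext' _ _ _ (FreeAlgebra.hom_ext (funext ?_))
  rintro (i | θ)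
  exacts [he i, ha θ]

def scaleFree (u ν : K) : FreeTet K →ₐ[K] Tet K m ν :=
  FreeAlgebra.lift K (Sum.elim (e K m ν) (fun θ => u • a K m ν θ))

@[simp] theorem scaleFree_V (u ν : K) (i : Fin 6) : scaleFree K m u ν (V K i) = e K m ν i := by
  simp [scaleFree, V]

@[simp] theorem scaleFree_A (u ν : K) (θ : Arr) :
    scaleFree K m u ν (A K θ) = u • a K m ν θ := by
  simp [scaleFree, A]

variable {K m}

theorem scaleFree_rel {u μ ν : K} (hν : ν = u ^ (3 * (m - 1)) * μ) ⦃x y : FreeTet K⦄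
    (r : TetRel K m μ x y) : scaleFree K m u ν x = scaleFree K m u ν y := by
  have rel {x y : FreeTet K} (r : TetRel K m ν x y) := RingQuot.mkAlgHom_rel K r
  cases r <;> simp only [map_mul, map_add, map_smul, map_pow, map_sum, map_one, map_zero,
    apply_ite (scaleFree K m u ν), scaleFree_V, scaleFree_A]
  case idem i j => simpa [apply_ite, mkAlgHom_V] using rel (.idem i j)
  case sum_one => exact (map_sum _ _ _).symm.trans ((rel .sum_one).trans (map_one _))
  case src_tgt θ =>
    rw [mul_smul_comm, smul_mul_assoc]
    simpa [mkAlgHom_V, mkAlgHom_A] using congrArg (u • ·) (rel (.src_tgt θ))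
  case rel_ga => exact smul_mul_smul_of_deformed_rel u hν (by simpa [mkAlgHom_A] using rel .rel_ga)
  case rel_rh => exact smul_mul_smul_of_deformed_rel u hν (by simpa [mkAlgHom_A] using rel .rel_rh)
  case rel_xi => exact smul_mul_smul_of_deformed_rel u hν (by simpa [mkAlgHom_A] using rel .rel_xi)
  case rel_de => exact smul_mul_smul_of_mul_eq u (by simpa [mkAlgHom_A] using rel .rel_de)
  case rel_om => exact smul_mul_smul_of_mul_eq u (by simpa [mkAlgHom_A] using rel .rel_om)
  case rel_si => exact smul_mul_smul_of_mul_eq u (by simpa [mkAlgHom_A] using rel .rel_si)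
  case rel_et => exact smul_mul_smul_of_mul_eq u (by simpa [mkAlgHom_A] using rel .rel_et)
  case rel_be => exact smul_mul_smul_of_mul_eq u (by simpa [mkAlgHom_A] using rel .rel_be)
  case rel_ep => exact smul_mul_smul_of_mul_eq u (by simpa [mkAlgHom_A] using rel .rel_ep)
  case rel_nu => exact smul_mul_smul_of_mul_eq u (by simpa [mkAlgHom_A] using rel .rel_nu)
  case rel_mu => exact smul_mul_smul_of_mul_eq u (by simpa [mkAlgHom_A] using rel .rel_mu)
  case rel_al => exact smul_mul_smul_of_mul_eq u (by simpa [mkAlgHom_A] using rel .rel_al)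
  case zero_rel θ => exact smul_path_eq_zero u (by simpa [mkAlgHom_A] using rel (.zero_rel θ))

def scale {u μ ν : K} (hν : ν = u ^ (3 * (m - 1)) * μ) : Tet K m μ →ₐ[K] Tet K m ν :=
  RingQuot.liftAlgHom K ⟨scaleFree K m u ν, scaleFree_rel hν⟩

@[simp] theorem scale_e {u μ ν : K} (hν : ν = u ^ (3 * (m - 1)) * μ) (i : Fin 6) :
    scale hν (e K m μ i) = e K m ν i :=
  (RingQuot.liftAlgHom_mkAlgHom_apply ..).trans (scaleFree_V ..)

@[simp] theorem scale_a {u μ ν : K} (hν : ν = u ^ (3 * (m - 1)) * μ) (θ : Arr) :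
    scale hν (a K m μ θ) = u • a K m ν θ :=
  (RingQuot.liftAlgHom_mkAlgHom_apply ..).trans (scaleFree_A ..)

theorem scale_comp_scale {u v μ ν : K} (hν : ν = u ^ (3 * (m - 1)) * μ)
    (hμ : μ = v ^ (3 * (m - 1)) * ν) (huv : u * v = 1) :
    (scale hμ).comp (scale hν) = AlgHom.id K (Tet K m μ) :=
  algHom_ext K m (fun i => by simp) (fun θ => by simp [smul_smul, huv])

def scaleEquiv {u μ ν : K} (hu : u ≠ 0) (hν : ν = u ^ (3 * (m - 1)) * μ) :
    Tet K m μ ≃ₐ[K] Tet K m ν :=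
  have hμ : μ = u⁻¹ ^ (3 * (m - 1)) * ν := by
    rw [inv_pow, eq_inv_mul_iff_mul_eq₀ (pow_ne_zero _ hu), hν]
  AlgEquiv.ofAlgHom (scale hν) (scale hμ) (scale_comp_scale hμ hν (inv_mul_cancel₀ hu))
    (scale_comp_scale hν hμ (mul_inv_cancel₀ hu))

@[simp] theorem scaleEquiv_apply {u μ ν : K} (hu : u ≠ 0) (hν : ν = u ^ (3 * (m - 1)) * μ)
    (x : Tet K m μ) : scaleEquiv hu hν x = scale hν x := rfl

end HigherTetrahedral

open HigherTetrahedral Arr in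
theorem tet_deformation_iso_general (K : Type) [Field K] (m : ℕ) (hm : 2 ≤ m) (lam : K)
    (t : K) (ht : t ≠ 0) (c : K) (hc : c ^ (3 * (m - 1)) = t) :
    ∃ φ : Tet K m lam ≃ₐ[K] Tet K m (t * lam),
      (∀ i : Fin 6, φ (e K m lam i) = e K m (t * lam) i) ∧
      (∀ θ : Arr, φ (a K m lam θ) = c • a K m (t * lam) θ) := by
  have hc0 : c ≠ 0 := by
    rintro rfl
    exact ht (by rw [← hc, zero_pow (by omega)])
  have ht_lam : t * lam = c ^ (3 * (m - 1)) * lam := by rw [hc]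
  exact ⟨scaleEquiv hc0 ht_lam, fun i => by simp, fun θ => by simp⟩

open HigherTetrahedral Arr in
/-- For `t ≠ 0` the algebra `Λ(t)` (with deformation parameter `tλ`) is isomorphic
to `Λ(1) = Λ(m,λ)`: choosing `a_t` with `a_t^(3(m−1)) = t`, sending each arrow `θ` to
`a_t·θ` (and fixing the vertex idempotents) yields an algebra isomorphism
`Λ(1) → Λ(t)`. -/
theorem tet_deformation_iso (K : Type) [Field K] (m : ℕ) (hm : 2 ≤ m) (lam : K)
    (hlam : lam ≠ 0) (t : K) (ht : t ≠ 0) (c : K) (hc : c ^ (3 * (m - 1)) = t) :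
    ∃ φ : Tet K m lam ≃ₐ[K] Tet K m (t * lam),
      (∀ i : Fin 6, φ (e K m lam i) = e K m (t * lam) i) ∧
      (∀ θ : Arr, φ (a K m lam θ) = c • a K m (t * lam) θ) :=
  tet_deformation_iso_general K m hm lam t ht c hc
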